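/- There exists a universal constant C > 0 with the following property. Let f : ℝ → ℝ be twice continuously differentiable with f'' ∈ L⁴(γ), let M > 0, and define h_M : ℝ → ℝ by h_M(t) = f(t) for |t| ≤ M, h_M(t) = f(M) + f'(M)·(t−M) for t > M, and h_M(t) = f(−M) + f'(−M)·(t+M) for t < −M; set r_M = f − h_M. Then ∫ r_M² dγ ≤ C·e^{−M²/4}·(∫ (f'')⁴ dγ)^{1/2} and ∫ (r_M')² dγ ≤ C·e^{−M²/4}·(∫ (f'')⁴ dγ)^{1/2}, where r_M' denotes the (everywhere defined) derivative of r_M. -/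

import Mathlib

open MeasureTheory ProbabilityTheory

/-- The centered Gaussian measure `N(0, σ²)` on `ℝ`. -/
noncomputable def gaussMeasure (σ : ℝ) : Measure ℝ :=
  gaussianReal 0 (Real.toNNReal (σ ^ 2))

/-- The truncation `h_M` of `f`: equal to `f` on `[−M, M]` and continued linearly with
matching slope outside. -/
noncomputable def truncLin (f : ℝ → ℝ) (M : ℝ) (t : ℝ) : ℝ :=
  if t > M then f M + deriv f M * (t - M)
  else if t < -M then f (-M) + deriv f (-M) * (t + M)
  else f t

namespace TruncAux

open Real Set Filter
open scoped NNReal ENNReal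

noncomputable def gpdf (x : ℝ) : ℝ := (Real.sqrt (2 * Real.pi))⁻¹ * Real.exp (-x ^ 2 / 2)

lemma gpdf_nonneg (x : ℝ) : 0 ≤ gpdf x := by
  unfold gpdf; positivity

lemma continuous_gpdf : Continuous gpdf := by
  unfold gpdf; fun_prop

lemma gpdf_eq (x : ℝ) : gpdf x = gaussianPDFReal 0 1 x := by
  unfold gpdf gaussianPDFReal
  norm_num

lemma gaussMeasure_one :
    gaussMeasure 1 = volume.withDensity (fun x => ENNReal.ofReal (gpdf x)) := by
  have h1 : Real.toNNReal ((1:ℝ) ^ 2) = 1 := by norm_num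
  rw [gaussMeasure, h1, gaussianReal_of_var_ne_zero 0 one_ne_zero]
  congr 1
  funext x
  rw [gaussianPDF, gpdf_eq]

lemma integral_gauss (g : ℝ → ℝ) :
    ∫ t, g t ∂(gaussMeasure 1) = ∫ t, gpdf t * g t := by
  rw [gaussMeasure_one]
  have hmeas : Measurable (fun x => Real.toNNReal (gpdf x)) :=
    continuous_gpdf.measurable.real_toNNReal
  have h : (fun x => ENNReal.ofReal (gpdf x))
      = (fun x => ((Real.toNNReal (gpdf x) : ℝ≥0) : ℝ≥0∞)) := rfl
  rw [h, integral_withDensity_eq_integral_smul hmeas]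
  congr 1
  funext x
  simp [NNReal.smul_def, Real.coe_toNNReal _ (gpdf_nonneg x)]

lemma integrable_gauss_iff (g : ℝ → ℝ) :
    Integrable g (gaussMeasure 1) ↔ Integrable (fun t => gpdf t * g t) volume := by
  rw [gaussMeasure_one]
  have hmeas : Measurable (fun x => Real.toNNReal (gpdf x)) :=
    continuous_gpdf.measurable.real_toNNReal
  have h : (fun x => ENNReal.ofReal (gpdf x))
      = (fun x => ((Real.toNNReal (gpdf x) : ℝ≥0) : ℝ≥0∞)) := rfl
  rw [h, integrable_withDensity_iff_integrable_smul hmeas]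
  constructor <;> intro hint <;> apply hint.congr <;>
    filter_upwards with x <;>
    simp [NNReal.smul_def, Real.coe_toNNReal _ (gpdf_nonneg x)]

lemma cs_interval {g : ℝ → ℝ} (hg : Continuous g) {a b : ℝ} (hab : a ≤ b) :
    (∫ x in a..b, g x) ^ 2 ≤ (b - a) * ∫ x in a..b, g x ^ 2 := by
  set S := ∫ x in a..b, g x with hS
  set Q := ∫ x in a..b, g x ^ 2 with hQ
  have hgi : IntervalIntegrable g volume a b := hg.intervalIntegrable a b
  have hgi2 : IntervalIntegrable (fun x => g x ^ 2) volume a b :=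
    (hg.pow 2).intervalIntegrable a b
  rcases eq_or_lt_of_le hab with rfl | hlt
  · simp [hS]
  · have h0 : 0 ≤ ∫ x in a..b, ((b - a) * g x - S) ^ 2 :=
      intervalIntegral.integral_nonneg hab (fun u _ => sq_nonneg _)
    have hexp : ∫ x in a..b, ((b - a) * g x - S) ^ 2
        = (b - a) ^ 2 * Q - 2 * (b - a) * S * S + (b - a) * S ^ 2 := by
      have h1 : ∀ x, ((b - a) * g x - S) ^ 2
          = (b - a) ^ 2 * g x ^ 2 - 2 * (b - a) * S * g x + S ^ 2 := by
        intro x; ring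
      simp_rw [h1]
      rw [intervalIntegral.integral_add (((hgi2.const_mul _)).sub (hgi.const_mul _))
        intervalIntegrable_const,
        intervalIntegral.integral_sub (hgi2.const_mul _) (hgi.const_mul _),
        intervalIntegral.integral_const_mul, intervalIntegral.integral_const_mul,
        intervalIntegral.integral_const]
      rw [← hS, ← hQ]; simp only [smul_eq_mul]; try ring
    nlinarith [h0, hexp, sub_pos.mpr hlt]

lemma sqrt_pow_le3 {u : ℝ} (hu : 0 ≤ u) : Real.sqrt (u ^ 3) ≤ 1 + u ^ 4 := by
  have h : u ^ 3 ≤ (1 + u ^ 4) ^ 2 := by nlinarith [mul_nonneg (sq_nonneg (u - 1)) (by positivity : (0:ℝ) ≤ 3 * u ^ 2 + 2 * u + 1), pow_nonneg hu 4, pow_nonneg hu 8]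
  calc Real.sqrt (u ^ 3) ≤ Real.sqrt ((1 + u ^ 4) ^ 2) := Real.sqrt_le_sqrt h
    _ = 1 + u ^ 4 := Real.sqrt_sq (by positivity)

lemma sqrt_pow_le7 {u : ℝ} (hu : 0 ≤ u) : Real.sqrt (u ^ 7) ≤ 1 + u ^ 4 := by
  have h : u ^ 7 ≤ (1 + u ^ 4) ^ 2 := by
    nlinarith [sq_nonneg (u ^ 4 - u ^ 3), sq_nonneg (u ^ 3 - u ^ 2), sq_nonneg (u ^ 2 - u), sq_nonneg (u - 1), pow_nonneg hu 4, pow_nonneg hu 8, pow_nonneg hu 6, pow_nonneg hu 2, hu]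
  calc Real.sqrt (u ^ 7) ≤ Real.sqrt ((1 + u ^ 4) ^ 2) := Real.sqrt_le_sqrt h
    _ = 1 + u ^ 4 := Real.sqrt_sq (by positivity)

lemma helper_bound {x u E J : ℝ} (hu : 0 ≤ u) (hJ : 0 ≤ J) {n : ℕ}
    (hn : Real.sqrt (u ^ n) ≤ 1 + u ^ 4)
    (hx : x ^ 4 ≤ u ^ n * (Real.sqrt (2 * Real.pi) * Real.exp E * J)) :
    x ^ 2 ≤ (1 + u ^ 4) *
      (Real.sqrt (Real.sqrt (2 * Real.pi)) * Real.exp (E / 2) * Real.sqrt J) := by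
  have hπ : (0:ℝ) ≤ Real.sqrt (2 * Real.pi) := Real.sqrt_nonneg _
  have hR0 : 0 ≤ u ^ n * (Real.sqrt (2 * Real.pi) * Real.exp E * J) := by positivity
  have h2 : x ^ 2 ≤ Real.sqrt (u ^ n * (Real.sqrt (2 * Real.pi) * Real.exp E * J)) :=
    (Real.le_sqrt (sq_nonneg x) hR0).mpr (by nlinarith [hx])
  calc x ^ 2 ≤ Real.sqrt (u ^ n * (Real.sqrt (2 * Real.pi) * Real.exp E * J)) := h2
    _ = Real.sqrt (u ^ n) *
        (Real.sqrt (Real.sqrt (2 * Real.pi)) * Real.sqrt (Real.exp E) * Real.sqrt J) := by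
        rw [Real.sqrt_mul (by positivity), Real.sqrt_mul (by positivity),
          Real.sqrt_mul hπ]
    _ = Real.sqrt (u ^ n) *
        (Real.sqrt (Real.sqrt (2 * Real.pi)) * Real.exp (E / 2) * Real.sqrt J) := by
        rw [Real.exp_half]
    _ ≤ (1 + u ^ 4) *
        (Real.sqrt (Real.sqrt (2 * Real.pi)) * Real.exp (E / 2) * Real.sqrt J) := by
        apply mul_le_mul_of_nonneg_right hn (by positivity)

lemma integrable_aux (a : ℝ) :
    Integrable (fun u : ℝ => (1 + (u - a) ^ 4) * Real.exp (-u ^ 2 / 4)) volume := by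
  have hmaj : Integrable
      (fun u : ℝ => (1 + 8 * a ^ 4 + 8 * 256) * Real.exp (-(1/8 : ℝ) * u ^ 2)) volume :=
    (integrable_exp_neg_mul_sq (by norm_num)).const_mul _
  apply hmaj.mono'
  · exact (((continuous_const.add ((continuous_id.sub continuous_const).pow 4)).mul
      ((Real.continuous_exp.comp (by fun_prop)))).aestronglyMeasurable)
  · filter_upwards with u
    have h0 : (0:ℝ) < Real.exp (-u ^ 2 / 4) := Real.exp_pos _
    rw [Real.norm_eq_abs, abs_of_nonneg (by positivity)]
    -- key: (1 + (u-a)^4) * exp(-u²/4) ≤ C * exp(-u²/8)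
    have hE : Real.exp (-(1/8 : ℝ) * u ^ 2) = Real.exp (-u ^ 2 / 4) * Real.exp (u ^ 2 / 8) := by
      rw [← Real.exp_add]; ring_nf
    have hE1 : (1:ℝ) ≤ Real.exp (u ^ 2 / 8) := Real.one_le_exp (by positivity)
    have hE2 : u ^ 4 ≤ 256 * Real.exp (u ^ 2 / 8) := by
      have h := Real.add_one_le_exp (u ^ 2 / 16)
      have h2 : (u ^ 2 / 16 + 1) ^ 2 ≤ Real.exp (u ^ 2 / 16) ^ 2 := by
        nlinarith [sq_nonneg (u ^ 2 / 16), Real.exp_pos (u ^ 2 / 16)]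
      have h3 : Real.exp (u ^ 2 / 16) ^ 2 = Real.exp (u ^ 2 / 8) := by
        rw [sq, ← Real.exp_add]; ring_nf
      nlinarith [h2, h3, sq_nonneg u, sq_nonneg (u ^ 2)]
    have hu4 : (u - a) ^ 4 ≤ 8 * (u ^ 4 + a ^ 4) := by
      nlinarith [sq_nonneg (u + a), sq_nonneg (u - a), sq_nonneg (u ^ 2 - a ^ 2), sq_nonneg ((u-a)^2 - 2*(u^2+a^2)), sq_nonneg u, sq_nonneg a]
    rw [hE]
    have f1 : (1 + (u - a) ^ 4) * Real.exp (-u ^ 2 / 4)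
        ≤ (1 + 8 * a ^ 4 + 8 * u ^ 4) * Real.exp (-u ^ 2 / 4) :=
      mul_le_mul_of_nonneg_right (by nlinarith [hu4]) h0.le
    have f2 : 8 * u ^ 4 * Real.exp (-u ^ 2 / 4)
        ≤ 8 * (256 * Real.exp (u ^ 2 / 8)) * Real.exp (-u ^ 2 / 4) :=
      mul_le_mul_of_nonneg_right (by nlinarith [hE2]) h0.le
    have f3 : (1 + 8 * a ^ 4) * Real.exp (-u ^ 2 / 4) * 1
        ≤ (1 + 8 * a ^ 4) * Real.exp (-u ^ 2 / 4) * Real.exp (u ^ 2 / 8) :=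
      mul_le_mul_of_nonneg_left hE1 (mul_nonneg (by positivity) h0.le)
    nlinarith [f1, f2, f3]
lemma contDiff_facts {f : ℝ → ℝ} (hf : ContDiff ℝ 2 f) :
    Differentiable ℝ f ∧ Differentiable ℝ (deriv f) ∧ Continuous (deriv (deriv f)) := by
  have h2 : ContDiff ℝ (1 + 1) f := by
    rw [(by norm_num : (1 : WithTop ℕ∞) + 1 = 2)]; exact hf
  obtain ⟨hd1, -, hc1⟩ := contDiff_succ_iff_deriv.mp h2
  obtain ⟨hd2, hc2⟩ := contDiff_one_iff_deriv.mp hc1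
  exact ⟨hd1, hd2, hc2⟩

lemma hasDerivAt_lin (c d e : ℝ) (x : ℝ) :
    HasDerivAt (fun u : ℝ => c + d * (u - e)) d x := by
  simpa using (((hasDerivAt_id x).sub_const e).const_mul d).const_add c

variable {f : ℝ → ℝ}

lemma deriv_sub_pow4_le (hd2 : Differentiable ℝ (deriv f))
    (hc2 : Continuous (deriv (deriv f))) {a b : ℝ} (hab : a ≤ b) :
    (deriv f b - deriv f a) ^ 4 ≤ (b - a) ^ 3 * ∫ s in a..b, (deriv (deriv f) s) ^ 4 := by
  have hint : IntervalIntegrable (deriv (deriv f)) volume a b := hc2.intervalIntegrable a b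
  have hftc : ∫ s in a..b, deriv (deriv f) s = deriv f b - deriv f a :=
    intervalIntegral.integral_deriv_eq_sub (fun x _ => hd2 x) hint
  set g := deriv (deriv f) with hg
  set S := ∫ s in a..b, g s with hSd
  set T := ∫ s in a..b, |g s| with hTd
  set Q := ∫ s in a..b, g s ^ 2 with hQd
  set F := ∫ s in a..b, g s ^ 4 with hFd
  have habs : |S| ≤ T := intervalIntegral.abs_integral_le_integral_abs hab
  have hcs1 : T ^ 2 ≤ (b - a) * Q := by
    have h := cs_interval hc2.abs hab
    simpa [sq_abs, ← hTd, ← hQd] using h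
  have hcs2 : Q ^ 2 ≤ (b - a) * F := by
    have h := cs_interval (hc2.pow 2) hab
    have h2 : (∫ s in a..b, (g s ^ 2) ^ 2) = F := by
      rw [hFd]; congr 1; funext s; ring
    simp only [Pi.pow_apply] at h
    rw [h2] at h
    exact h
  have hQ0 : 0 ≤ Q := intervalIntegral.integral_nonneg hab (fun u _ => sq_nonneg _)
  have hT0 : 0 ≤ T := intervalIntegral.integral_nonneg hab (fun u _ => abs_nonneg _)
  have hF0 : 0 ≤ F := intervalIntegral.integral_nonneg hab (fun u _ => by positivity)
  have hL0 : 0 ≤ b - a := sub_nonneg.mpr hab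
  have hS2 : S ^ 2 ≤ T ^ 2 := by nlinarith [le_abs_self S, neg_abs_le S]
  have key : S ^ 4 ≤ (b - a) ^ 3 * F := by
    calc S ^ 4 = (S ^ 2) ^ 2 := by ring
      _ ≤ (T ^ 2) ^ 2 := by nlinarith [sq_nonneg S, sq_nonneg T]
      _ ≤ ((b - a) * Q) ^ 2 := by nlinarith [sq_nonneg T]
      _ = (b - a) ^ 2 * Q ^ 2 := by ring
      _ ≤ (b - a) ^ 2 * ((b - a) * F) := by
          apply mul_le_mul_of_nonneg_left hcs2 (by positivity)
      _ = (b - a) ^ 3 * F := by ring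
  rw [← hftc]
  exact key

lemma deriv_sub_pow4_le' (hd2 : Differentiable ℝ (deriv f))
    (hc2 : Continuous (deriv (deriv f))) {a b s c : ℝ} (hab : a ≤ b)
    (hs : s ∈ Set.Icc a b) (hc : c ∈ Set.Icc a b) :
    (deriv f s - deriv f c) ^ 4 ≤ (b - a) ^ 3 * ∫ u in a..b, (deriv (deriv f) u) ^ 4 := by
  have hF0 : (0:ℝ≥0∞) = 0 := rfl
  have hFnn : 0 ≤ᵐ[volume.restrict (Set.Ioc a b)] fun u => (deriv (deriv f) u) ^ 4 :=
    Filter.Eventually.of_forall (fun u => by positivity)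
  have hFi : IntervalIntegrable (fun u => (deriv (deriv f) u) ^ 4) volume a b :=
    (hc2.pow 4).intervalIntegrable a b
  have main : ∀ x y : ℝ, x ∈ Set.Icc a b → y ∈ Set.Icc a b → x ≤ y →
      (deriv f y - deriv f x) ^ 4 ≤ (b - a) ^ 3 * ∫ u in a..b, (deriv (deriv f) u) ^ 4 := by
    intro x y hx hy hxy
    have h1 := deriv_sub_pow4_le hd2 hc2 hxy
    have h2 : (∫ u in x..y, (deriv (deriv f) u) ^ 4) ≤ ∫ u in a..b, (deriv (deriv f) u) ^ 4 :=
      intervalIntegral.integral_mono_interval hx.1 hxy hy.2 hFnn hFi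
    have h3 : (y - x) ^ 3 ≤ (b - a) ^ 3 := by
      apply pow_le_pow_left₀ (by linarith [hx.1, hxy]) (by linarith [hx.1, hy.2]) 3
    have h4 : 0 ≤ ∫ u in x..y, (deriv (deriv f) u) ^ 4 :=
      intervalIntegral.integral_nonneg hxy (fun u _ => by positivity)
    calc (deriv f y - deriv f x) ^ 4 ≤ (y - x) ^ 3 * ∫ u in x..y, (deriv (deriv f) u) ^ 4 := h1
      _ ≤ (b - a) ^ 3 * ∫ u in a..b, (deriv (deriv f) u) ^ 4 := by
          apply mul_le_mul h3 h2 h4 (pow_nonneg (by linarith : (0:ℝ) ≤ b - a) 3)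
  rcases le_total c s with h | h
  · exact main c s hc hs h
  · have := main s c hs hc h
    calc (deriv f s - deriv f c) ^ 4 = (deriv f c - deriv f s) ^ 4 := by ring
      _ ≤ _ := this
lemma taylor_left (hd1 : Differentiable ℝ f) (hd2 : Differentiable ℝ (deriv f))
    (hc2 : Continuous (deriv (deriv f))) {a b : ℝ} (hab : a ≤ b) :
    (f b - (f a + deriv f a * (b - a))) ^ 4
      ≤ (b - a) ^ 7 * ∫ s in a..b, (deriv (deriv f) s) ^ 4 := by
  set F := ∫ s in a..b, (deriv (deriv f) s) ^ 4 with hFd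
  have hF0 : 0 ≤ F := intervalIntegral.integral_nonneg hab (fun u _ => by positivity)
  have hL0 : 0 ≤ b - a := sub_nonneg.mpr hab
  set B := (b - a) ^ 3 * F with hBd
  have hB0 : 0 ≤ B := by positivity
  set ρ : ℝ → ℝ := fun u => f u - (f a + deriv f a * (u - a)) with hρd
  have hρ : ∀ s, HasDerivAt ρ (deriv f s - deriv f a) s := fun s =>
    ((hd1 s).hasDerivAt).sub (hasDerivAt_lin (f a) (deriv f a) a s)
  have hcont : Continuous fun s => deriv f s - deriv f a :=
    (hd2.continuous).sub continuous_const
  have hftc : ∫ s in a..b, (deriv f s - deriv f a) = ρ b - ρ a :=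
    intervalIntegral.integral_eq_sub_of_hasDerivAt (fun s _ => hρ s)
      (hcont.intervalIntegrable a b)
  have hρa : ρ a = 0 := by simp [hρd]
  have hpt : ∀ s ∈ Set.Icc a b, |deriv f s - deriv f a| ≤ Real.sqrt (Real.sqrt B) := by
    intro s hs
    have h4 : (deriv f s - deriv f a) ^ 4 ≤ B :=
      deriv_sub_pow4_le' hd2 hc2 hab hs ⟨le_refl a, hab⟩
    have h2 : (deriv f s - deriv f a) ^ 2 ≤ Real.sqrt B :=
      (Real.le_sqrt (sq_nonneg _) hB0).mpr (by nlinarith [h4])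
    exact (Real.le_sqrt (abs_nonneg _) (Real.sqrt_nonneg _)).mpr (by rwa [sq_abs])
  have hbnd : |ρ b| ≤ (b - a) * Real.sqrt (Real.sqrt B) := by
    have h1 : |∫ s in a..b, (deriv f s - deriv f a)|
        ≤ ∫ s in a..b, |deriv f s - deriv f a| :=
      intervalIntegral.abs_integral_le_integral_abs hab
    have h2 : (∫ s in a..b, |deriv f s - deriv f a|)
        ≤ ∫ _s in a..b, Real.sqrt (Real.sqrt B) :=
      intervalIntegral.integral_mono_on hab (hcont.abs.intervalIntegrable a b)
        intervalIntegrable_const hpt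
    rw [intervalIntegral.integral_const, smul_eq_mul] at h2
    calc |ρ b| = |ρ b - ρ a| := by rw [hρa, sub_zero]
      _ = |∫ s in a..b, (deriv f s - deriv f a)| := by rw [hftc]
      _ ≤ _ := le_trans h1 h2
  have h4 : |ρ b| ^ 4 ≤ ((b - a) * Real.sqrt (Real.sqrt B)) ^ 4 :=
    pow_le_pow_left₀ (abs_nonneg _) hbnd 4
  have hsq : ((b - a) * Real.sqrt (Real.sqrt B)) ^ 4 = (b - a) ^ 4 * B := by
    have h1 : Real.sqrt (Real.sqrt B) ^ 4 = B := by
      have := Real.sq_sqrt (Real.sqrt_nonneg B)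
      have h2 := Real.sq_sqrt hB0
      nlinarith [this, h2]
    calc ((b - a) * Real.sqrt (Real.sqrt B)) ^ 4
        = (b - a) ^ 4 * Real.sqrt (Real.sqrt B) ^ 4 := by ring
      _ = (b - a) ^ 4 * B := by rw [h1]
  have habs4 : (ρ b) ^ 4 = |ρ b| ^ 4 := by
    rw [← abs_pow]
    exact (abs_of_nonneg (by positivity)).symm
  calc (f b - (f a + deriv f a * (b - a))) ^ 4 = (ρ b) ^ 4 := by rw [hρd]
    _ = |ρ b| ^ 4 := habs4
    _ ≤ ((b - a) * Real.sqrt (Real.sqrt B)) ^ 4 := h4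
    _ = (b - a) ^ 4 * B := hsq
    _ = (b - a) ^ 7 * F := by rw [hBd]; ring

lemma taylor_right (hd1 : Differentiable ℝ f) (hd2 : Differentiable ℝ (deriv f))
    (hc2 : Continuous (deriv (deriv f))) {a b : ℝ} (hab : a ≤ b) :
    (f a - (f b + deriv f b * (a - b))) ^ 4
      ≤ (b - a) ^ 7 * ∫ s in a..b, (deriv (deriv f) s) ^ 4 := by
  set F := ∫ s in a..b, (deriv (deriv f) s) ^ 4 with hFd
  have hF0 : 0 ≤ F := intervalIntegral.integral_nonneg hab (fun u _ => by positivity)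
  have hL0 : 0 ≤ b - a := sub_nonneg.mpr hab
  set B := (b - a) ^ 3 * F with hBd
  have hB0 : 0 ≤ B := by positivity
  set ρ : ℝ → ℝ := fun u => f u - (f b + deriv f b * (u - b)) with hρd
  have hρ : ∀ s, HasDerivAt ρ (deriv f s - deriv f b) s := fun s =>
    ((hd1 s).hasDerivAt).sub (hasDerivAt_lin (f b) (deriv f b) b s)
  have hcont : Continuous fun s => deriv f s - deriv f b :=
    (hd2.continuous).sub continuous_const
  have hftc : ∫ s in a..b, (deriv f s - deriv f b) = ρ b - ρ a :=
    intervalIntegral.integral_eq_sub_of_hasDerivAt (fun s _ => hρ s)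
      (hcont.intervalIntegrable a b)
  have hρb : ρ b = 0 := by simp [hρd]
  have hpt : ∀ s ∈ Set.Icc a b, |deriv f s - deriv f b| ≤ Real.sqrt (Real.sqrt B) := by
    intro s hs
    have h4 : (deriv f s - deriv f b) ^ 4 ≤ B :=
      deriv_sub_pow4_le' hd2 hc2 hab hs ⟨hab, le_refl b⟩
    have h2 : (deriv f s - deriv f b) ^ 2 ≤ Real.sqrt B :=
      (Real.le_sqrt (sq_nonneg _) hB0).mpr (by nlinarith [h4])
    exact (Real.le_sqrt (abs_nonneg _) (Real.sqrt_nonneg _)).mpr (by rwa [sq_abs])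
  have hbnd : |ρ a| ≤ (b - a) * Real.sqrt (Real.sqrt B) := by
    have h1 : |∫ s in a..b, (deriv f s - deriv f b)|
        ≤ ∫ s in a..b, |deriv f s - deriv f b| :=
      intervalIntegral.abs_integral_le_integral_abs hab
    have h2 : (∫ s in a..b, |deriv f s - deriv f b|)
        ≤ ∫ _s in a..b, Real.sqrt (Real.sqrt B) :=
      intervalIntegral.integral_mono_on hab (hcont.abs.intervalIntegrable a b)
        intervalIntegrable_const hpt
    rw [intervalIntegral.integral_const, smul_eq_mul] at h2
    calc |ρ a| = |ρ b - ρ a| := by rw [hρb, zero_sub, abs_neg]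
      _ = |∫ s in a..b, (deriv f s - deriv f b)| := by rw [hftc]
      _ ≤ _ := le_trans h1 h2
  have h4 : |ρ a| ^ 4 ≤ ((b - a) * Real.sqrt (Real.sqrt B)) ^ 4 :=
    pow_le_pow_left₀ (abs_nonneg _) hbnd 4
  have hsq : ((b - a) * Real.sqrt (Real.sqrt B)) ^ 4 = (b - a) ^ 4 * B := by
    have h1 : Real.sqrt (Real.sqrt B) ^ 4 = B := by
      have := Real.sq_sqrt (Real.sqrt_nonneg B)
      have h2 := Real.sq_sqrt hB0
      nlinarith [this, h2]
    calc ((b - a) * Real.sqrt (Real.sqrt B)) ^ 4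
        = (b - a) ^ 4 * Real.sqrt (Real.sqrt B) ^ 4 := by ring
      _ = (b - a) ^ 4 * B := by rw [h1]
  have habs4 : (ρ a) ^ 4 = |ρ a| ^ 4 := by
    rw [← abs_pow]
    exact (abs_of_nonneg (by positivity)).symm
  calc (f a - (f b + deriv f b * (a - b))) ^ 4 = (ρ a) ^ 4 := by rw [hρd]
    _ = |ρ a| ^ 4 := habs4
    _ ≤ ((b - a) * Real.sqrt (Real.sqrt B)) ^ 4 := h4
    _ = (b - a) ^ 4 * B := hsq
    _ = (b - a) ^ 7 * F := by rw [hBd]; ring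

lemma interval_le_gauss {g2 : ℝ → ℝ} (hc2 : Continuous g2) {a b : ℝ} (hab : a ≤ b)
    (hI : Integrable (fun t => g2 t ^ 4) (gaussMeasure 1)) {W : ℝ}
    (hW : ∀ s ∈ Set.Icc a b, s ^ 2 ≤ W) :
    (∫ s in a..b, g2 s ^ 4)
      ≤ Real.sqrt (2 * Real.pi) * Real.exp (W / 2) *
        ∫ t, g2 t ^ 4 ∂(gaussMeasure 1) := by
  have hIv : Integrable (fun t => gpdf t * g2 t ^ 4) volume := (integrable_gauss_iff _).mp hI
  have hπ : (0:ℝ) < Real.sqrt (2 * Real.pi) := Real.sqrt_pos.mpr (by positivity)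
  have hpt : ∀ s ∈ Set.Icc a b, g2 s ^ 4
      ≤ (Real.sqrt (2 * Real.pi) * Real.exp (W / 2)) * (gpdf s * g2 s ^ 4) := by
    intro s hs
    have h1 : (1:ℝ) ≤ Real.sqrt (2 * Real.pi) * Real.exp (W / 2) * gpdf s := by
      unfold gpdf
      rw [show Real.sqrt (2 * Real.pi) * Real.exp (W / 2) *
          ((Real.sqrt (2 * Real.pi))⁻¹ * Real.exp (-s ^ 2 / 2))
          = Real.exp (W / 2) * Real.exp (-s ^ 2 / 2) from by field_simp]
      rw [← Real.exp_add]
      apply Real.one_le_exp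
      have := hW s hs
      linarith [sq_nonneg s]
    have h2 := mul_le_mul_of_nonneg_left h1 (by positivity : (0:ℝ) ≤ g2 s ^ 4)
    calc g2 s ^ 4 = g2 s ^ 4 * 1 := by ring
      _ ≤ g2 s ^ 4 * (Real.sqrt (2 * Real.pi) * Real.exp (W / 2) * gpdf s) := h2
      _ = (Real.sqrt (2 * Real.pi) * Real.exp (W / 2)) * (gpdf s * g2 s ^ 4) := by ring
  have hmono : (∫ s in a..b, g2 s ^ 4)
      ≤ ∫ s in a..b, (Real.sqrt (2 * Real.pi) * Real.exp (W / 2)) * (gpdf s * g2 s ^ 4) :=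
    intervalIntegral.integral_mono_on hab ((hc2.pow 4).intervalIntegrable a b)
      (((continuous_const.mul (continuous_gpdf.mul (hc2.pow 4)))).intervalIntegrable a b)
      (fun x hx => hpt x hx)
  have hcm : (∫ s in a..b, (Real.sqrt (2 * Real.pi) * Real.exp (W / 2)) * (gpdf s * g2 s ^ 4))
      = (Real.sqrt (2 * Real.pi) * Real.exp (W / 2)) * ∫ s in a..b, gpdf s * g2 s ^ 4 :=
    intervalIntegral.integral_const_mul _ _
  have hset : (∫ s in a..b, gpdf s * g2 s ^ 4)
      ≤ ∫ t, gpdf t * g2 t ^ 4 := by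
    rw [intervalIntegral.integral_of_le hab]
    apply setIntegral_le_integral hIv
    filter_upwards with x
    exact mul_nonneg (gpdf_nonneg x) (by positivity)
  have hfin : (∫ t, gpdf t * g2 t ^ 4) = ∫ t, g2 t ^ 4 ∂(gaussMeasure 1) :=
    (integral_gauss _).symm
  calc (∫ s in a..b, g2 s ^ 4)
      ≤ ∫ s in a..b, (Real.sqrt (2 * Real.pi) * Real.exp (W / 2)) * (gpdf s * g2 s ^ 4) := hmono
    _ = (Real.sqrt (2 * Real.pi) * Real.exp (W / 2)) * ∫ s in a..b, gpdf s * g2 s ^ 4 := hcm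
    _ ≤ (Real.sqrt (2 * Real.pi) * Real.exp (W / 2)) * ∫ t, gpdf t * g2 t ^ 4 := by
        apply mul_le_mul_of_nonneg_left hset (by positivity)
    _ = _ := by rw [hfin]
lemma tail_plus {M : ℝ} (hM : 0 < M) :
    (∫ t in Set.Ioi M, (1 + (t - M) ^ 4) * Real.exp (-t ^ 2 / 4))
      ≤ Real.exp (-M ^ 2 / 4) * ∫ u, (1 + u ^ 4) * Real.exp (-u ^ 2 / 4) := by
  set H : ℝ → ℝ := fun u => (1 + u ^ 4) * Real.exp (-u ^ 2 / 4) with hHd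
  have hKint : Integrable H volume := by
    have := integrable_aux 0
    simpa [hHd] using this
  have hGint : Integrable (fun t => (1 + (t - M) ^ 4) * Real.exp (-t ^ 2 / 4)) volume :=
    integrable_aux M
  have htr : Integrable (fun t => H (t - M)) volume := hKint.comp_sub_right M
  have htp : Integrable (fun t => Real.exp (-M ^ 2 / 4) * H (t - M)) volume :=
    htr.const_mul _
  have step1 : (∫ t in Set.Ioi M, (1 + (t - M) ^ 4) * Real.exp (-t ^ 2 / 4))
      ≤ ∫ t in Set.Ioi M, Real.exp (-M ^ 2 / 4) * H (t - M) := by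
    apply setIntegral_mono_on hGint.integrableOn htp.integrableOn measurableSet_Ioi
    intro t ht
    have htM : M < t := ht
    have hexp : Real.exp (-t ^ 2 / 4)
        ≤ Real.exp (-M ^ 2 / 4) * Real.exp (-(t - M) ^ 2 / 4) := by
      rw [← Real.exp_add]
      apply Real.exp_le_exp.mpr
      nlinarith [hM, htM]
    have h0 : (0:ℝ) ≤ 1 + (t - M) ^ 4 := by positivity
    calc (1 + (t - M) ^ 4) * Real.exp (-t ^ 2 / 4)
        ≤ (1 + (t - M) ^ 4) * (Real.exp (-M ^ 2 / 4) * Real.exp (-(t - M) ^ 2 / 4)) :=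
          mul_le_mul_of_nonneg_left hexp h0
      _ = Real.exp (-M ^ 2 / 4) * H (t - M) := by rw [hHd]; ring
  have step2 : (∫ t in Set.Ioi M, Real.exp (-M ^ 2 / 4) * H (t - M))
      = Real.exp (-M ^ 2 / 4) * ∫ t in Set.Ioi M, H (t - M) :=
    integral_const_mul _ _
  have step3 : (∫ t in Set.Ioi M, H (t - M)) = ∫ u in Set.Ioi 0, H u := by
    rw [← integral_indicator measurableSet_Ioi, ← integral_indicator measurableSet_Ioi]
    have heq : (fun t => Set.indicator (Set.Ioi M) (fun t => H (t - M)) t)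
        = fun t => Set.indicator (Set.Ioi 0) H (t - M) := by
      funext t
      by_cases h : M < t
      · rw [Set.indicator_of_mem (by exact h : t ∈ Set.Ioi M),
          Set.indicator_of_mem (by simp [Set.mem_Ioi]; linarith : t - M ∈ Set.Ioi (0:ℝ))]
      · rw [Set.indicator_of_notMem (by simpa using h),
          Set.indicator_of_notMem (by simp only [Set.mem_Ioi, not_lt]; linarith [le_of_not_gt h])]
    rw [heq]
    exact integral_sub_right_eq_self (Set.indicator (Set.Ioi 0) H) M
  have step4 : (∫ u in Set.Ioi 0, H u) ≤ ∫ u, H u := by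
    apply setIntegral_le_integral hKint
    filter_upwards with u
    rw [hHd]; positivity
  calc (∫ t in Set.Ioi M, (1 + (t - M) ^ 4) * Real.exp (-t ^ 2 / 4))
      ≤ ∫ t in Set.Ioi M, Real.exp (-M ^ 2 / 4) * H (t - M) := step1
    _ = Real.exp (-M ^ 2 / 4) * ∫ t in Set.Ioi M, H (t - M) := step2
    _ = Real.exp (-M ^ 2 / 4) * ∫ u in Set.Ioi 0, H u := by rw [step3]
    _ ≤ Real.exp (-M ^ 2 / 4) * ∫ u, H u := by
        apply mul_le_mul_of_nonneg_left step4 (Real.exp_pos _).le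

lemma tail_minus (M : ℝ) :
    (∫ t in Set.Iio (-M), (1 + (-t - M) ^ 4) * Real.exp (-t ^ 2 / 4))
      = ∫ t in Set.Ioi M, (1 + (t - M) ^ 4) * Real.exp (-t ^ 2 / 4) := by
  rw [← integral_indicator measurableSet_Iio, ← integral_indicator measurableSet_Ioi]
  rw [← integral_neg_eq_self
    (Set.indicator (Set.Iio (-M)) (fun t => (1 + (-t - M) ^ 4) * Real.exp (-t ^ 2 / 4)))]
  congr 1
  funext x
  by_cases h : M < x
  · rw [Set.indicator_of_mem (by simp [Set.mem_Iio]; linarith : -x ∈ Set.Iio (-M)),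
      Set.indicator_of_mem (by exact h : x ∈ Set.Ioi M)]
    ring_nf
  · rw [Set.indicator_of_notMem (by simp only [Set.mem_Iio, not_lt]; linarith [le_of_not_gt h]),
      Set.indicator_of_notMem (by simpa using h)]

lemma claim_right {f : ℝ → ℝ} (hd1 : Differentiable ℝ f) (hd2 : Differentiable ℝ (deriv f))
    (hc2 : Continuous (deriv (deriv f)))
    (hIint : Integrable (fun t => deriv (deriv f) t ^ 4) (gaussMeasure 1))
    {M t : ℝ} (hM : 0 < M) (ht : M < t) :
    (f t - (f M + deriv f M * (t - M))) ^ 2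
      ≤ (1 + (t - M) ^ 4) * (Real.sqrt (Real.sqrt (2 * Real.pi)) * Real.exp (t ^ 2 / 4) *
          Real.sqrt (∫ u, deriv (deriv f) u ^ 4 ∂(gaussMeasure 1))) := by
  have hab : M ≤ t := ht.le
  have hI0 : 0 ≤ ∫ u, deriv (deriv f) u ^ 4 ∂(gaussMeasure 1) :=
    integral_nonneg (fun u => by positivity)
  have hW : ∀ s ∈ Set.Icc M t, s ^ 2 ≤ t ^ 2 := fun s hs => by nlinarith [hs.1, hs.2, hM]
  have hA := interval_le_gauss hc2 hab hIint hW
  have hT := taylor_left hd1 hd2 hc2 hab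
  have hx : (f t - (f M + deriv f M * (t - M))) ^ 4
      ≤ (t - M) ^ 7 * (Real.sqrt (2 * Real.pi) * Real.exp (t ^ 2 / 2) *
          ∫ u, deriv (deriv f) u ^ 4 ∂(gaussMeasure 1)) := by
    calc (f t - (f M + deriv f M * (t - M))) ^ 4
        ≤ (t - M) ^ 7 * ∫ s in M..t, (deriv (deriv f) s) ^ 4 := hT
      _ ≤ (t - M) ^ 7 * (Real.sqrt (2 * Real.pi) * Real.exp (t ^ 2 / 2) *
          ∫ u, deriv (deriv f) u ^ 4 ∂(gaussMeasure 1)) :=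
          mul_le_mul_of_nonneg_left hA (pow_nonneg (by linarith) 7)
  have h := helper_bound (by linarith : (0:ℝ) ≤ t - M) hI0
    (sqrt_pow_le7 (by linarith : (0:ℝ) ≤ t - M)) hx
  rwa [show (t ^ 2 / 2 / 2 : ℝ) = t ^ 2 / 4 from (by ring)] at h

lemma claim_right_deriv {f : ℝ → ℝ} (hd2 : Differentiable ℝ (deriv f))
    (hc2 : Continuous (deriv (deriv f)))
    (hIint : Integrable (fun t => deriv (deriv f) t ^ 4) (gaussMeasure 1))
    {M t : ℝ} (hM : 0 < M) (ht : M < t) :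
    (deriv f t - deriv f M) ^ 2
      ≤ (1 + (t - M) ^ 4) * (Real.sqrt (Real.sqrt (2 * Real.pi)) * Real.exp (t ^ 2 / 4) *
          Real.sqrt (∫ u, deriv (deriv f) u ^ 4 ∂(gaussMeasure 1))) := by
  have hab : M ≤ t := ht.le
  have hI0 : 0 ≤ ∫ u, deriv (deriv f) u ^ 4 ∂(gaussMeasure 1) :=
    integral_nonneg (fun u => by positivity)
  have hW : ∀ s ∈ Set.Icc M t, s ^ 2 ≤ t ^ 2 := fun s hs => by nlinarith [hs.1, hs.2, hM]
  have hA := interval_le_gauss hc2 hab hIint hW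
  have hT := deriv_sub_pow4_le hd2 hc2 hab
  have hx : (deriv f t - deriv f M) ^ 4
      ≤ (t - M) ^ 3 * (Real.sqrt (2 * Real.pi) * Real.exp (t ^ 2 / 2) *
          ∫ u, deriv (deriv f) u ^ 4 ∂(gaussMeasure 1)) := by
    calc (deriv f t - deriv f M) ^ 4
        ≤ (t - M) ^ 3 * ∫ s in M..t, (deriv (deriv f) s) ^ 4 := hT
      _ ≤ _ := mul_le_mul_of_nonneg_left hA (pow_nonneg (by linarith) 3)
  have h := helper_bound (by linarith : (0:ℝ) ≤ t - M) hI0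
    (sqrt_pow_le3 (by linarith : (0:ℝ) ≤ t - M)) hx
  rwa [show (t ^ 2 / 2 / 2 : ℝ) = t ^ 2 / 4 from (by ring)] at h

lemma claim_left {f : ℝ → ℝ} (hd1 : Differentiable ℝ f) (hd2 : Differentiable ℝ (deriv f))
    (hc2 : Continuous (deriv (deriv f)))
    (hIint : Integrable (fun t => deriv (deriv f) t ^ 4) (gaussMeasure 1))
    {M t : ℝ} (hM : 0 < M) (ht : t < -M) :
    (f t - (f (-M) + deriv f (-M) * (t + M))) ^ 2
      ≤ (1 + (-t - M) ^ 4) * (Real.sqrt (Real.sqrt (2 * Real.pi)) * Real.exp (t ^ 2 / 4) *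
          Real.sqrt (∫ u, deriv (deriv f) u ^ 4 ∂(gaussMeasure 1))) := by
  have hab : t ≤ -M := ht.le
  have hI0 : 0 ≤ ∫ u, deriv (deriv f) u ^ 4 ∂(gaussMeasure 1) :=
    integral_nonneg (fun u => by positivity)
  have hW : ∀ s ∈ Set.Icc t (-M), s ^ 2 ≤ t ^ 2 := by
    intro s hs
    have key : (0:ℝ) ≤ (s - t) * (-(s + t)) :=
      mul_nonneg (by linarith [hs.1]) (by nlinarith [hs.2, hM])
    nlinarith [key]
  have hA := interval_le_gauss hc2 hab hIint hW
  have hT := taylor_right hd1 hd2 hc2 hab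
  rw [show (t - -M : ℝ) = t + M from (by ring)] at hT
  have hx : (f t - (f (-M) + deriv f (-M) * (t + M))) ^ 4
      ≤ (-t - M) ^ 7 * (Real.sqrt (2 * Real.pi) * Real.exp (t ^ 2 / 2) *
          ∫ u, deriv (deriv f) u ^ 4 ∂(gaussMeasure 1)) := by
    rw [show (-t - M : ℝ) = -M - t from (by ring)]
    calc (f t - (f (-M) + deriv f (-M) * (t + M))) ^ 4
        ≤ (-M - t) ^ 7 * ∫ s in t..(-M), (deriv (deriv f) s) ^ 4 := hT
      _ ≤ _ := mul_le_mul_of_nonneg_left hA (pow_nonneg (by linarith) 7)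
  have h := helper_bound (by linarith : (0:ℝ) ≤ -t - M) hI0
    (sqrt_pow_le7 (by linarith : (0:ℝ) ≤ -t - M)) hx
  rwa [show (t ^ 2 / 2 / 2 : ℝ) = t ^ 2 / 4 from (by ring)] at h

lemma claim_left_deriv {f : ℝ → ℝ} (hd2 : Differentiable ℝ (deriv f))
    (hc2 : Continuous (deriv (deriv f)))
    (hIint : Integrable (fun t => deriv (deriv f) t ^ 4) (gaussMeasure 1))
    {M t : ℝ} (hM : 0 < M) (ht : t < -M) :
    (deriv f t - deriv f (-M)) ^ 2
      ≤ (1 + (-t - M) ^ 4) * (Real.sqrt (Real.sqrt (2 * Real.pi)) * Real.exp (t ^ 2 / 4) *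
          Real.sqrt (∫ u, deriv (deriv f) u ^ 4 ∂(gaussMeasure 1))) := by
  have hab : t ≤ -M := ht.le
  have hI0 : 0 ≤ ∫ u, deriv (deriv f) u ^ 4 ∂(gaussMeasure 1) :=
    integral_nonneg (fun u => by positivity)
  have hW : ∀ s ∈ Set.Icc t (-M), s ^ 2 ≤ t ^ 2 := by
    intro s hs
    have key : (0:ℝ) ≤ (s - t) * (-(s + t)) :=
      mul_nonneg (by linarith [hs.1]) (by nlinarith [hs.2, hM])
    nlinarith [key]
  have hA := interval_le_gauss hc2 hab hIint hW
  have hT := deriv_sub_pow4_le hd2 hc2 hab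
  have hx : (deriv f t - deriv f (-M)) ^ 4
      ≤ (-t - M) ^ 3 * (Real.sqrt (2 * Real.pi) * Real.exp (t ^ 2 / 2) *
          ∫ u, deriv (deriv f) u ^ 4 ∂(gaussMeasure 1)) := by
    rw [show (-t - M : ℝ) = -M - t from (by ring)]
    calc (deriv f t - deriv f (-M)) ^ 4
        = (deriv f (-M) - deriv f t) ^ 4 := by ring
      _ ≤ (-M - t) ^ 3 * ∫ s in t..(-M), (deriv (deriv f) s) ^ 4 := hT
      _ ≤ _ := mul_le_mul_of_nonneg_left hA (pow_nonneg (by linarith) 3)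
  have h := helper_bound (by linarith : (0:ℝ) ≤ -t - M) hI0
    (sqrt_pow_le3 (by linarith : (0:ℝ) ≤ -t - M)) hx
  rwa [show (t ^ 2 / 2 / 2 : ℝ) = t ^ 2 / 4 from (by ring)] at h

lemma deriv_trunc_eq {f : ℝ → ℝ} (hd1 : Differentiable ℝ f) {M : ℝ} (hM : 0 < M)
    {t : ℝ} (ht1 : t ≠ M) (ht2 : t ≠ -M) :
    deriv (fun u => f u - truncLin f M u) t =
      (if M < t then deriv f t - deriv f M
        else if t < -M then deriv f t - deriv f (-M) else 0) := by
  by_cases h : M < t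
  · rw [if_pos h]
    have hev : (fun u => f u - truncLin f M u)
        =ᶠ[nhds t] (fun u => f u - (f M + deriv f M * (u - M))) := by
      filter_upwards [IsOpen.mem_nhds isOpen_Ioi (h : t ∈ Set.Ioi M)] with u hu
      unfold truncLin
      rw [if_pos (Set.mem_Ioi.mp hu)]
    rw [hev.deriv_eq]
    exact (((hd1 t).hasDerivAt).sub (hasDerivAt_lin (f M) (deriv f M) M t)).deriv
  · by_cases h2 : t < -M
    · rw [if_neg h, if_pos h2]
      have hev : (fun u => f u - truncLin f M u)
          =ᶠ[nhds t] (fun u => f u - (f (-M) + deriv f (-M) * (u - -M))) := by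
        filter_upwards [IsOpen.mem_nhds isOpen_Iio (h2 : t ∈ Set.Iio (-M))] with u hu
        unfold truncLin
        have hu' : u < -M := Set.mem_Iio.mp hu
        rw [if_neg (by intro hc; linarith : ¬ u > M), if_pos hu']
        ring_nf
      rw [hev.deriv_eq]
      exact (((hd1 t).hasDerivAt).sub (hasDerivAt_lin (f (-M)) (deriv f (-M)) (-M) t)).deriv
    · rw [if_neg h, if_neg h2]
      have hIoo : t ∈ Set.Ioo (-M) M :=
        ⟨lt_of_le_of_ne (not_lt.mp h2) (Ne.symm ht2), lt_of_le_of_ne (not_lt.mp h) ht1⟩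
      have hev : (fun u => f u - truncLin f M u) =ᶠ[nhds t] (fun _ => (0:ℝ)) := by
        filter_upwards [IsOpen.mem_nhds isOpen_Ioo hIoo] with u hu
        unfold truncLin
        rw [if_neg (not_lt.mpr hu.2.le), if_neg (not_lt.mpr hu.1.le)]
        exact sub_self _
      rw [hev.deriv_eq]
      simp

end TruncAux

open scoped ENNReal NNReal

open TruncAux Real Set Filter in
/-- the key tail estimate in the proof of Lemma 4.3: both the truncation
error `r_M = f − h_M` and its derivative are small in `L²(γ)`, with bound
`C·e^{−M²/4}·‖f''‖_{L⁴(γ)}²`. -/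
theorem truncation_tail_estimate :
    ∃ C : ℝ, 0 < C ∧ ∀ f : ℝ → ℝ, ContDiff ℝ 2 f →
      MemLp (deriv (deriv f)) 4 (gaussMeasure 1) →
      ∀ M : ℝ, 0 < M →
        (∫ t, (f t - truncLin f M t) ^ 2 ∂(gaussMeasure 1)) ≤
          C * Real.exp (-M ^ 2 / 4) *
            Real.sqrt (∫ t, (deriv (deriv f) t) ^ 4 ∂(gaussMeasure 1)) ∧
        (∫ t, (deriv (fun u => f u - truncLin f M u) t) ^ 2 ∂(gaussMeasure 1)) ≤
          C * Real.exp (-M ^ 2 / 4) *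
            Real.sqrt (∫ t, (deriv (deriv f) t) ^ 4 ∂(gaussMeasure 1)) := by
  
  classical
  set K : ℝ := ∫ u, (1 + u ^ 4) * Real.exp (-u ^ 2 / 4) with hKdef
  have hKint : Integrable (fun u : ℝ => (1 + u ^ 4) * Real.exp (-u ^ 2 / 4)) volume := by
    simpa using integrable_aux 0
  have hK0 : 0 ≤ K := integral_nonneg (fun u => by positivity)
  set c0 : ℝ := Real.sqrt (Real.sqrt (2 * Real.pi)) with hc0def
  have hc00 : 0 ≤ c0 := Real.sqrt_nonneg _
  have hπ : (0:ℝ) < Real.sqrt (2 * Real.pi) := Real.sqrt_pos.mpr (by positivity)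
  have hC0 : 0 ≤ 2 * c0 * K / Real.sqrt (2 * Real.pi) :=
    div_nonneg (mul_nonneg (by linarith) hK0) hπ.le
  refine ⟨2 * c0 * K / Real.sqrt (2 * Real.pi) + 1, by linarith, ?_⟩
  intro f hf h4 M hM
  obtain ⟨hd1, hd2, hc2⟩ := contDiff_facts hf
  have hIint : Integrable (fun t => deriv (deriv f) t ^ 4) (gaussMeasure 1) := by
    have h := h4.integrable_norm_rpow (by norm_num) (by norm_num)
    apply h.congr
    filter_upwards with x
    rw [Real.norm_eq_abs, show ((4:ℝ≥0∞).toReal) = ((4:ℕ):ℝ) from by norm_num,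
      Real.rpow_natCast, ← abs_pow, abs_of_nonneg (by positivity)]
  have hI0 : 0 ≤ ∫ u, deriv (deriv f) u ^ 4 ∂(gaussMeasure 1) :=
    integral_nonneg (fun u => by positivity)
  have hSI0 : 0 ≤ Real.sqrt (∫ u, deriv (deriv f) u ^ 4 ∂(gaussMeasure 1)) :=
    Real.sqrt_nonneg _
  set SI : ℝ := Real.sqrt (∫ u, deriv (deriv f) u ^ 4 ∂(gaussMeasure 1)) with hSIdef
  set Φ : ℝ → ℝ := fun t =>
    (if M < t then 1 + (t - M) ^ 4 else if t < -M then 1 + (-t - M) ^ 4 else 0) *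
      (c0 * Real.exp (t ^ 2 / 4) * SI) with hΦd
  have hΦ0 : ∀ t, 0 ≤ Φ t := by
    intro t
    rw [hΦd]
    dsimp only
    apply mul_nonneg _ (by positivity)
    split_ifs <;> positivity
  -- pointwise bound for r
  have claim_r : ∀ t, (f t - truncLin f M t) ^ 2 ≤ Φ t := by
    intro t
    by_cases ht : M < t
    · have h := claim_right hd1 hd2 hc2 hIint hM ht
      rw [hΦd]
      dsimp only
      rw [if_pos ht]
      show (f t - truncLin f M t) ^ 2 ≤ _
      unfold truncLin
      rw [if_pos ht]
      exact h
    · by_cases ht2 : t < -M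
      · have h := claim_left hd1 hd2 hc2 hIint hM ht2
        rw [hΦd]
        dsimp only
        rw [if_neg ht, if_pos ht2]
        show (f t - truncLin f M t) ^ 2 ≤ _
        unfold truncLin
        rw [if_neg ht, if_pos ht2]
        exact h
      · have hz : f t - truncLin f M t = 0 := by
          unfold truncLin
          rw [if_neg ht, if_neg ht2]
          exact sub_self _
        rw [hz]
        simpa using hΦ0 t
  -- a.e. pointwise bound for the derivative
  have claim_d : ∀ᵐ t ∂(gaussMeasure 1),
      (deriv (fun u => f u - truncLin f M u) t) ^ 2 ≤ Φ t := by
    have habs : gaussMeasure 1 ≪ volume := by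
      rw [gaussMeasure_one]
      exact withDensity_absolutelyContinuous _ _
    have hnull : volume ({M, -M} : Set ℝ) = 0 := by
      rw [Set.insert_eq]
      exact measure_union_null (measure_singleton M) (measure_singleton (-M))
    have hgnull : gaussMeasure 1 ({M, -M} : Set ℝ) = 0 := habs hnull
    rw [ae_iff]
    apply measure_mono_null _ hgnull
    intro t ht
    simp only [Set.mem_setOf_eq] at ht
    by_contra hmem
    simp only [Set.mem_insert_iff, Set.mem_singleton_iff] at hmem
    push_neg at hmem
    apply ht
    rw [deriv_trunc_eq hd1 hM hmem.1 hmem.2]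
    by_cases h : M < t
    · rw [if_pos h]
      have hb := claim_right_deriv hd2 hc2 hIint hM h
      rw [hΦd]; dsimp only; rw [if_pos h]; exact hb
    · by_cases h2 : t < -M
      · rw [if_neg h, if_pos h2]
        have hb := claim_left_deriv hd2 hc2 hIint hM h2
        rw [hΦd]; dsimp only; rw [if_neg h, if_pos h2]; exact hb
      · rw [if_neg h, if_neg h2]
        simpa using hΦ0 t
  -- key pointwise identity for gpdf * Φ
  have key : ∀ t, gpdf t * Φ t =
      (if M < t then 1 + (t - M) ^ 4 else if t < -M then 1 + (-t - M) ^ 4 else 0) *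
        ((Real.sqrt (2 * Real.pi))⁻¹ * c0 * SI * Real.exp (-t ^ 2 / 4)) := by
    intro t
    have hexp : Real.exp (-t ^ 2 / 2) * Real.exp (t ^ 2 / 4) = Real.exp (-t ^ 2 / 4) := by
      rw [← Real.exp_add]; ring_nf
    rw [hΦd]
    dsimp only
    unfold gpdf
    split_ifs
    · linear_combination ((1 + (t - M) ^ 4) * (Real.sqrt (2 * Real.pi))⁻¹ * c0 * SI) * hexp
    · linear_combination ((1 + (-t - M) ^ 4) * (Real.sqrt (2 * Real.pi))⁻¹ * c0 * SI) * hexp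
    · ring
  -- integrability of Φ w.r.t. the Gaussian measure
  have hΦint : Integrable Φ (gaussMeasure 1) := by
    rw [integrable_gauss_iff]
    have hmaj : Integrable (fun t =>
        ((Real.sqrt (2 * Real.pi))⁻¹ * c0 * SI) *
          ((1 + (t - M) ^ 4) * Real.exp (-t ^ 2 / 4) +
            (1 + (t + M) ^ 4) * Real.exp (-t ^ 2 / 4))) volume := by
      apply Integrable.const_mul
      apply (integrable_aux M).add
      have : (fun t : ℝ => (1 + (t + M) ^ 4) * Real.exp (-t ^ 2 / 4))
          = (fun t : ℝ => (1 + (t - -M) ^ 4) * Real.exp (-t ^ 2 / 4)) := by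
        funext t; ring_nf
      rw [this]
      exact integrable_aux (-M)
    apply hmaj.mono'
    · have hmΦ : Measurable Φ := by
        rw [hΦd]
        apply Measurable.mul
        · apply Measurable.ite (measurableSet_Ioi (a := M)) (by fun_prop)
          apply Measurable.ite (measurableSet_Iio (a := -M)) (by fun_prop) (by fun_prop)
        · fun_prop
      exact (continuous_gpdf.measurable.mul hmΦ).aestronglyMeasurable
    · filter_upwards with t
      rw [key t, Real.norm_eq_abs]
      have he : (0:ℝ) < Real.exp (-t ^ 2 / 4) := Real.exp_pos _
      have hc1 : (0:ℝ) ≤ (Real.sqrt (2 * Real.pi))⁻¹ * c0 * SI := by positivity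
      split_ifs with h h2
      · rw [abs_of_nonneg (by positivity)]
        nlinarith [mul_nonneg hc1 (mul_nonneg (by positivity : (0:ℝ) ≤ 1 + (t + M) ^ 4) he.le)]
      · rw [abs_of_nonneg (by positivity)]
        have hq : (-t - M) ^ 4 = (t + M) ^ 4 := by ring
        rw [hq]
        nlinarith [mul_nonneg hc1 (mul_nonneg (by positivity : (0:ℝ) ≤ 1 + (t - M) ^ 4) he.le)]
      · simp only [zero_mul, abs_zero]
        positivity
  -- bound on the integral of Φ
  have hΦval : (∫ t, Φ t ∂(gaussMeasure 1))
      ≤ (2 * c0 * K / Real.sqrt (2 * Real.pi)) * Real.exp (-M ^ 2 / 4) * SI := by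
    rw [integral_gauss]
    have key2 : (fun t => gpdf t * Φ t) = fun t =>
        ((Real.sqrt (2 * Real.pi))⁻¹ * c0 * SI) *
          (Set.indicator (Set.Ioi M) (fun t => (1 + (t - M) ^ 4) * Real.exp (-t ^ 2 / 4)) t
            + Set.indicator (Set.Iio (-M)) (fun t => (1 + (-t - M) ^ 4) * Real.exp (-t ^ 2 / 4)) t) := by
      funext t
      rw [key t]
      by_cases h : M < t
      · rw [if_pos h, Set.indicator_of_mem (Set.mem_Ioi.mpr h),
          Set.indicator_of_notMem (by simp only [Set.mem_Iio, not_lt]; linarith)]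
        ring
      · by_cases h2 : t < -M
        · rw [if_neg h, if_pos h2, Set.indicator_of_notMem (by simpa using h),
            Set.indicator_of_mem (Set.mem_Iio.mpr h2)]
          ring
        · rw [if_neg h, if_neg h2, Set.indicator_of_notMem (by simpa using h),
            Set.indicator_of_notMem (by simpa using h2)]
          ring
    rw [key2]
    have hi1 : Integrable (Set.indicator (Set.Ioi M)
        (fun t => (1 + (t - M) ^ 4) * Real.exp (-t ^ 2 / 4))) volume :=
      (integrable_aux M).indicator measurableSet_Ioi
    have hi2 : Integrable (Set.indicator (Set.Iio (-M))
        (fun t => (1 + (-t - M) ^ 4) * Real.exp (-t ^ 2 / 4))) volume := by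
      apply Integrable.indicator _ measurableSet_Iio
      have : (fun t : ℝ => (1 + (-t - M) ^ 4) * Real.exp (-t ^ 2 / 4))
          = (fun t : ℝ => (1 + (t - -M) ^ 4) * Real.exp (-t ^ 2 / 4)) := by
        funext t; ring_nf
      rw [this]
      exact integrable_aux (-M)
    rw [integral_const_mul, integral_add hi1 hi2, integral_indicator measurableSet_Ioi,
      integral_indicator measurableSet_Iio, tail_minus M]
    have htp := tail_plus hM
    have hc1 : (0:ℝ) ≤ (Real.sqrt (2 * Real.pi))⁻¹ * c0 * SI := by positivity
    calc ((Real.sqrt (2 * Real.pi))⁻¹ * c0 * SI) *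
          ((∫ t in Set.Ioi M, (1 + (t - M) ^ 4) * Real.exp (-t ^ 2 / 4))
            + ∫ t in Set.Ioi M, (1 + (t - M) ^ 4) * Real.exp (-t ^ 2 / 4))
        ≤ ((Real.sqrt (2 * Real.pi))⁻¹ * c0 * SI) *
          (Real.exp (-M ^ 2 / 4) * K + Real.exp (-M ^ 2 / 4) * K) := by
          apply mul_le_mul_of_nonneg_left (by linarith) hc1
      _ = (2 * c0 * K / Real.sqrt (2 * Real.pi)) * Real.exp (-M ^ 2 / 4) * SI := by
          field_simp
          ring
  have hfinal : (2 * c0 * K / Real.sqrt (2 * Real.pi)) * Real.exp (-M ^ 2 / 4) * SI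
      ≤ (2 * c0 * K / Real.sqrt (2 * Real.pi) + 1) * Real.exp (-M ^ 2 / 4) * SI := by
    have h1 : (0:ℝ) ≤ Real.exp (-M ^ 2 / 4) * SI :=
      mul_nonneg (Real.exp_pos _).le hSI0
    nlinarith [h1]
  constructor
  · calc (∫ t, (f t - truncLin f M t) ^ 2 ∂(gaussMeasure 1))
        ≤ ∫ t, Φ t ∂(gaussMeasure 1) :=
          integral_mono_of_nonneg (Filter.Eventually.of_forall fun t => sq_nonneg _)
            hΦint (Filter.Eventually.of_forall claim_r)
      _ ≤ (2 * c0 * K / Real.sqrt (2 * Real.pi)) * Real.exp (-M ^ 2 / 4) * SI := hΦval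
      _ ≤ _ := hfinal
  · calc (∫ t, (deriv (fun u => f u - truncLin f M u) t) ^ 2 ∂(gaussMeasure 1))
        ≤ ∫ t, Φ t ∂(gaussMeasure 1) :=
          integral_mono_of_nonneg (Filter.Eventually.of_forall fun t => sq_nonneg _)
            hΦint claim_d
      _ ≤ (2 * c0 * K / Real.sqrt (2 * Real.pi)) * Real.exp (-M ^ 2 / 4) * SI := hΦval
      _ ≤ _ := hfinal
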